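/- (Reduced multialgebra of a resonant submultialgebra.) Let C be totally antisymmetric structure constants satisfying the generalized Jacobi identity, with degree map P : ι → I and subspace structure i : (Fin n → I) → Set I (C (a₁,…,aₙ) c ≠ 0 implies P(c) ∈ i(P(a₁),…,P(aₙ))), and let S be a finite commutative semigroup with subsets (S_p)_{p ∈ I} in resonance (S_{p₁}·⋯·S_{pₙ} ⊆ ⋂_{r ∈ i(p₁,…,pₙ)} S_r). Suppose each S_p is partitioned as S_p = Š_p ∪ Ŝ_p with Š_p ∩ Ŝ_p = ∅ and Ŝ_{p₁}·Š_{p₂}·⋯·Š_{pₙ} ⊆ ⋂_{r ∈ i(p₁,…,pₙ)} Ŝ_r for all p₁,…,pₙ ∈ I. Then the reduced structure constants on the index set Ř = {(a,α) : ι × S | α ∈ Š_{P(a)}}, defined by C̃ ((a₁,α₁),…,(aₙ,αₙ)) (c,γ) = C (a₁,…,aₙ) c if α₁·⋯·αₙ = γ and 0 otherwise, are totally antisymmetric under simultaneous permutation (with sign) of the n lower index pairs and satisfy the generalized Jacobi identity on Ř (with the intermediate summation index ranging over Ř); hence |Ǧ_R| is a higher-order Lie algebra of order n. -/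

import Mathlib

open scoped Classical

noncomputable section

/-- Total antisymmetry of structure constants. -/
def IsTotallyAntisymmetric {k ι : Type*} [CommRing k] {n : ℕ}
    (C : (Fin n → ι) → ι → k) : Prop :=
  ∀ (σ : Equiv.Perm (Fin n)) (i : Fin n → ι) (t : ι),
    C (i ∘ σ) t = (Equiv.Perm.sign σ : ℤ) • C i t

/-- The generalized Jacobi identity. -/
def SatisfiesGJI {k ι : Type*} [CommRing k] [Fintype ι] {n : ℕ}
    (C : (Fin n → ι) → ι → k) : Prop :=
  ∀ (j : Fin (2 * n - 1) → ι) (t : ι),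
    (∑ σ : Equiv.Perm (Fin (2 * n - 1)),
      (Equiv.Perm.sign σ : ℤ) •
        ∑ ρ : ι,
          C (fun l : Fin n => j (σ ⟨(l : ℕ), lt_of_lt_of_le l.isLt (by omega)⟩)) ρ *
          C (fun l : Fin n =>
              if hl : (l : ℕ) = 0 then ρ
              else j (σ ⟨n + (l : ℕ) - 1, by have := l.isLt; omega⟩)) t) = 0

/-- The product `α₁·α₂·⋯·αₙ` of a family of semigroup elements, computed in the
monoid `WithOne S` (for `n ≥ 1` it is the genuine semigroup product, coerced). -/
def wprod {S : Type*} [CommSemigroup S] {n : ℕ} (f : Fin n → S) : WithOne S :=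
  ∏ l, (f l : WithOne S)

/-- The reduced structure constants on the index set
`Ř = {(a,α) : ι × S | α ∈ Š_{P a}}`:
`C̃ ((a₁,α₁),…,(aₙ,αₙ)) (c,γ) = C (a₁,…,aₙ) c` if `α₁·⋯·αₙ = γ`, else `0`. -/
def reducedResonantC {k ι S I : Type*} [CommRing k] [CommSemigroup S] {n : ℕ}
    (C : (Fin n → ι) → ι → k) (P : ι → I) (Sc : I → Set S) :
    (Fin n → {x : ι × S // x.2 ∈ Sc (P x.1)}) →
      {x : ι × S // x.2 ∈ Sc (P x.1)} → k :=
  fun A t =>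
    if wprod (fun l => ((A l : ι × S)).2) = ((((t : ι × S)).2 : S) : WithOne S)
    then C (fun l => ((A l : ι × S)).1) ((t : ι × S)).1 else 0

/-! Since `S` is commutative, the product `α₁⋯αₙ` is invariant under permutations, so the
antisymmetry of `C` transfers at once. In the Jacobi sum for a fixed permutation `σ`, the summation
index `(ρ, β)` is forced to `β = α_{σ 1}⋯α_{σ n}`. By resonance this `β` lies in `S_{P ρ}` whenever
the inner constant is nonzero; if it lay in `Ŝ_{P ρ}`, the reduction condition would put the total
product `γ` into `Ŝ_{P c}`, impossible for `γ ∈ Š_{P c}`. So restricting `β` to `Š` loses only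
vanishing terms, each term becomes `[α₁⋯α_{2n-1} = γ]` times the corresponding term for `C`, and
the Jacobi identity of `C` transfers. -/

section ReducedResonance

variable {k ι S I : Type*}

section JacobiBlocks

variable {α : Type*} {n : ℕ}

/-- A family `x₀, …, x_{2n-2}` enters the generalized Jacobi identity as the inner arguments
`x₀, …, x_{n-1}` and, after the summation index `ρ`, the outer arguments `x_n, …, x_{2n-2}`. -/
def jacobiInner (x : Fin (2 * n - 1) → α) : Fin n → α :=
  fun l => x ⟨l, by omega⟩

def jacobiOuter (ρ : α) (x : Fin (2 * n - 1) → α) : Fin n → α :=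
  fun l => if _ : (l : ℕ) = 0 then ρ else x ⟨n + l - 1, by omega⟩

theorem apply_jacobiOuter {β : Type*} (g : α → β) (ρ : α) (x : Fin (2 * n - 1) → α)
    (l : Fin n) : g (jacobiOuter ρ x l) = jacobiOuter (g ρ) (g ∘ x) l := by
  unfold jacobiOuter
  split_ifs <;> rfl

theorem jacobiOuter_zero (hn : 0 < n) (ρ : α) (x : Fin (2 * n - 1) → α) :
    jacobiOuter ρ x ⟨0, hn⟩ = ρ :=
  dif_pos rfl

theorem jacobiOuter_of_ne_zero (ρ : α) (x : Fin (2 * n - 1) → α) {l : Fin n}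
    (hl : (l : ℕ) ≠ 0) : jacobiOuter ρ x l = x ⟨n + l - 1, by omega⟩ :=
  dif_neg hl

variable {M : Type*} [CommMonoid M]

theorem prod_eq_prod_jacobiInner_mul (x : Fin (2 * n - 1) → M) :
    ∏ m, x m = (∏ l, jacobiInner x l) * ∏ l : Fin (n - 1), x ⟨n + l, by omega⟩ := by
  rw [← (finCongr (by omega : n + (n - 1) = 2 * n - 1)).prod_comp x, Fin.prod_univ_add]
  rfl

theorem prod_jacobiOuter (hn : 0 < n) (β : M) (x : Fin (2 * n - 1) → M) :
    ∏ l, jacobiOuter β x l = β * ∏ l : Fin (n - 1), x ⟨n + l, by omega⟩ := by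
  rw [← (finCongr (by omega : n - 1 + 1 = n)).prod_comp, Fin.prod_univ_succ]
  rfl

end JacobiBlocks

def jacobiTerm [CommRing k] [Fintype ι] {n : ℕ} (C : (Fin n → ι) → ι → k)
    (x : Fin (2 * n - 1) → ι) (t : ι) : k :=
  ∑ ρ, C (jacobiInner x) ρ * C (jacobiOuter ρ x) t

theorem satisfiesGJI_iff [CommRing k] [Fintype ι] {n : ℕ} (C : (Fin n → ι) → ι → k) :
    SatisfiesGJI C ↔ ∀ (j : Fin (2 * n - 1) → ι) (t : ι),
      ∑ σ : Equiv.Perm (Fin (2 * n - 1)), (Equiv.Perm.sign σ : ℤ) • jacobiTerm C (j ∘ σ) t = 0 :=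
  Iff.rfl

section WProd

variable [CommSemigroup S] {n : ℕ}

theorem wprod_comp_perm (f : Fin n → S) (σ : Equiv.Perm (Fin n)) : wprod (f ∘ σ) = wprod f :=
  Equiv.prod_comp σ fun l => (f l : WithOne S)

theorem wprod_eq_wprod_jacobiInner_mul (x : Fin (2 * n - 1) → S) :
    wprod x = wprod (jacobiInner x) * ∏ l : Fin (n - 1), (x ⟨n + l, by omega⟩ : WithOne S) :=
  prod_eq_prod_jacobiInner_mul fun m => (x m : WithOne S)

theorem wprod_jacobiOuter (hn : 0 < n) (β : S) (x : Fin (2 * n - 1) → S) :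
    wprod (jacobiOuter β x) = β * ∏ l : Fin (n - 1), (x ⟨n + l, by omega⟩ : WithOne S) := by
  rw [wprod, ← prod_jacobiOuter hn (β : WithOne S) fun m => (x m : WithOne S)]
  exact Finset.prod_congr rfl fun l _ => apply_jacobiOuter _ β x l

end WProd

theorem isTotallyAntisymmetric_reducedResonantC [CommRing k] [CommSemigroup S] {n : ℕ}
    {C : (Fin n → ι) → ι → k} (hA : IsTotallyAntisymmetric C) (P : ι → I) (Sc : I → Set S) :
    IsTotallyAntisymmetric (reducedResonantC C P Sc) := by
  intro σ A t
  have hprod : wprod (fun l => ((A ∘ σ) l : ι × S).2) = wprod (fun l => (A l : ι × S).2) :=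
    wprod_comp_perm (fun l => (A l : ι × S).2) σ
  unfold reducedResonantC
  rw [hprod]
  split_ifs
  · exact hA σ (fun l => (A l : ι × S).1) (t : ι × S).1
  · rw [smul_zero]

theorem sum_ite_mem_mul_ite_eq [Fintype S] {M R : Type*} [DecidableEq M]
    [NonUnitalNonAssocSemiring R]
    {e : S → M} (he : Function.Injective e) (T : Set S) [DecidablePred (· ∈ T)] (Q : M → Prop)
    [DecidablePred Q] (W : M) (A B : R) (hW : Q W → A * B ≠ 0 → ∃ u ∈ T, W = e u) :
    ∑ β : S, (if β ∈ T then (if W = e β then A else 0) * (if Q (e β) then B else 0) else 0) =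
      if Q W then A * B else 0 := by
  by_cases hex : ∃ u ∈ T, W = e u
  · obtain ⟨u, huT, rfl⟩ := hex
    rw [Finset.sum_eq_single u (fun β _ hβu => ?_) (by simp), if_pos huT, if_pos rfl]
    · split_ifs <;> simp
    · simp [he.ne (Ne.symm hβu)]
  · rw [Finset.sum_eq_zero fun β _ => ?_]
    · split_ifs with hQ
      · by_contra hAB
        exact hex (hW hQ (Ne.symm hAB))
      · rfl
    · split_ifs with hβ hWβ
      · exact absurd ⟨β, hβ, hWβ⟩ hex
      all_goals simp

section Resonance

variable [CommRing k] [CommSemigroup S] {n : ℕ}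

structure IsResonantReduction (C : (Fin n → ι) → ι → k) (P : ι → I)
    (idx : (Fin n → I) → Set I) (Sp Sc Sh : I → Set S) : Prop where
  compatible : ∀ (a : Fin n → ι) (c : ι), C a c ≠ 0 → P c ∈ idx (fun l => P (a l))
  union : ∀ p : I, Sp p = Sc p ∪ Sh p
  disjoint : ∀ p : I, Sc p ∩ Sh p = ∅
  resonant : ∀ (p : Fin n → I) (s : Fin n → S), (∀ l, s l ∈ Sp (p l)) →
    ∀ r ∈ idx p, ∃ u ∈ Sp r, wprod s = (u : WithOne S)
  reduction : ∀ (hn : 0 < n) (p : Fin n → I) (s : Fin n → S), s ⟨0, hn⟩ ∈ Sh (p ⟨0, hn⟩) →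
    (∀ l : Fin n, (l : ℕ) ≠ 0 → s l ∈ Sc (p l)) →
    ∀ r ∈ idx p, ∃ u ∈ Sh r, wprod s = (u : WithOne S)

variable {C : (Fin n → ι) → ι → k} {P : ι → I} {idx : (Fin n → I) → Set I}
  {Sp Sc Sh : I → Set S}

theorem IsResonantReduction.wprod_ne_coe_of_mem_Sh (hR : IsResonantReduction C P idx Sp Sc Sh)
    (hn : 0 < n) {a : Fin n → ι} {s : Fin n → S} (h₀ : s ⟨0, hn⟩ ∈ Sh (P (a ⟨0, hn⟩)))
    (hs : ∀ l : Fin n, (l : ℕ) ≠ 0 → s l ∈ Sc (P (a l))) {c : ι} (hc : C a c ≠ 0)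
    {γ : S} (hγ : γ ∈ Sc (P c)) : wprod s ≠ γ := by
  intro hsγ
  obtain ⟨v, hv, hsv⟩ := hR.reduction hn (fun l => P (a l)) s h₀ hs (P c) (hR.compatible a c hc)
  obtain rfl : v = γ := WithOne.coe_inj.mp (hsv.symm.trans hsγ)
  exact Set.eq_empty_iff_forall_notMem.mp (hR.disjoint (P c)) v ⟨hγ, hv⟩

theorem IsResonantReduction.exists_wprod_jacobiInner_eq_coe
    (hR : IsResonantReduction C P idx Sp Sc Sh) (hn : 0 < n)
    {x : Fin (2 * n - 1) → ι} {y : Fin (2 * n - 1) → S} (hxy : ∀ m, y m ∈ Sc (P (x m)))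
    {c : ι} {γ : S} (hγ : γ ∈ Sc (P c)) (hy : wprod y = γ) {r : ι}
    (hC : C (jacobiInner x) r * C (jacobiOuter r x) c ≠ 0) :
    ∃ u ∈ Sc (P r), wprod (jacobiInner y) = u := by
  have hSp : ∀ l, jacobiInner y l ∈ Sp (P (jacobiInner x l)) := fun l =>
    (hR.union _).symm ▸ Or.inl (hxy _)
  obtain ⟨u, hu, hyu⟩ :=
    hR.resonant _ _ hSp (P r) (hR.compatible _ _ (left_ne_zero_of_mul hC))
  rcases (hR.union (P r)).subst (motive := (u ∈ ·)) hu with hu | hu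
  · exact ⟨u, hu, hyu⟩
  · refine absurd ?_ (hR.wprod_ne_coe_of_mem_Sh hn (a := jacobiOuter r x) (s := jacobiOuter u y)
      ?_ ?_ (right_ne_zero_of_mul hC) hγ)
    · rw [wprod_jacobiOuter hn, ← hyu, ← wprod_eq_wprod_jacobiInner_mul, hy]
    · rwa [jacobiOuter_zero, jacobiOuter_zero]
    · intro l hl
      rw [jacobiOuter_of_ne_zero _ _ hl, jacobiOuter_of_ne_zero _ _ hl]
      exact hxy _

theorem IsResonantReduction.jacobiTerm_reducedResonantC [Fintype ι] [Fintype S]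
    (hR : IsResonantReduction C P idx Sp Sc Sh) (hn : 0 < n)
    (x : Fin (2 * n - 1) → {x : ι × S // x.2 ∈ Sc (P x.1)})
    (t : {x : ι × S // x.2 ∈ Sc (P x.1)}) :
    jacobiTerm (reducedResonantC C P Sc) x t =
      if wprod (fun m => (x m : ι × S).2) = ((t : ι × S).2 : WithOne S)
      then jacobiTerm C (fun m => (x m : ι × S).1) (t : ι × S).1 else 0 := by
  set a := fun m => (x m : ι × S).1
  set y := fun m => (x m : ι × S).2
  set w := ∏ l : Fin (n - 1), (y ⟨n + l, by omega⟩ : WithOne S)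
  set f : ι × S → k := fun p =>
    (if wprod (jacobiInner y) = (p.2 : WithOne S) then C (jacobiInner a) p.1 else 0) *
      (if (p.2 : WithOne S) * w = (t : ι × S).2 then C (jacobiOuter p.1 a) (t : ι × S).1 else 0)
  have hterm : ∀ ρ, reducedResonantC C P Sc (jacobiInner x) ρ *
      reducedResonantC C P Sc (jacobiOuter ρ x) t = f ρ := by
    intro ρ
    have h₁ : (fun l => (jacobiOuter ρ x l).val.1) = jacobiOuter (ρ : ι × S).1 a :=
      funext (apply_jacobiOuter (fun z : {x : ι × S // x.2 ∈ Sc (P x.1)} => z.val.1) ρ x)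
    have h₂ : (fun l => (jacobiOuter ρ x l).val.2) = jacobiOuter (ρ : ι × S).2 y :=
      funext (apply_jacobiOuter (fun z : {x : ι × S // x.2 ∈ Sc (P x.1)} => z.val.2) ρ x)
    simp only [reducedResonantC, h₁, h₂, wprod_jacobiOuter hn]
    rfl
  calc jacobiTerm (reducedResonantC C P Sc) x t
      = ∑ p : ι × S, if p.2 ∈ Sc (P p.1) then f p else 0 := by
        rw [jacobiTerm, Finset.sum_congr rfl fun ρ _ => hterm ρ, ← Finset.sum_filter]
        exact (Finset.sum_subtype _ (by simp) f).symm
    _ = ∑ r, if wprod (jacobiInner y) * w = (t : ι × S).2 then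
          C (jacobiInner a) r * C (jacobiOuter r a) (t : ι × S).1 else 0 := by
        rw [Fintype.sum_prod_type]
        refine Finset.sum_congr rfl fun r _ => ?_
        exact sum_ite_mem_mul_ite_eq WithOne.coe_injective (Sc (P r))
          (· * w = ((t : ι × S).2 : WithOne S)) (wprod (jacobiInner y)) (C (jacobiInner a) r)
          (C (jacobiOuter r a) (t : ι × S).1) fun hyt hC =>
            hR.exists_wprod_jacobiInner_eq_coe hn (fun m => (x m).2) t.2
              (by rwa [wprod_eq_wprod_jacobiInner_mul]) hC
    _ = _ := by
        rw [Finset.sum_ite_irrel, Finset.sum_const_zero, ← wprod_eq_wprod_jacobiInner_mul]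
        rfl

theorem IsResonantReduction.satisfiesGJI_reducedResonantC [Fintype ι] [Fintype S]
    (hR : IsResonantReduction C P idx Sp Sc Sh) (hn : 0 < n) (hJ : SatisfiesGJI C) :
    SatisfiesGJI (reducedResonantC C P Sc) := by
  rw [satisfiesGJI_iff] at hJ ⊢
  intro j t
  set y := fun m => (j m : ι × S).2
  have hterm : ∀ σ : Equiv.Perm (Fin (2 * n - 1)),
      jacobiTerm (reducedResonantC C P Sc) (j ∘ σ) t =
        if wprod y = ((t : ι × S).2 : WithOne S)
        then jacobiTerm C ((fun m => (j m : ι × S).1) ∘ σ) (t : ι × S).1 else 0 := fun σ => by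
    rw [hR.jacobiTerm_reducedResonantC hn, ← wprod_comp_perm y σ]
    rfl
  simp only [hterm, smul_ite, smul_zero, Finset.sum_ite_irrel, Finset.sum_const_zero]
  split_ifs
  · exact hJ _ _
  · rfl

end Resonance

end ReducedResonance

/-- (Reduced multialgebra of a resonant submultialgebra.) In the resonance setting,
with disjoint partitions `Sp p = Š p ∪ Ŝ p` satisfying the reduction condition
`Ŝ_{p₁}·Š_{p₂}·⋯·Š_{pₙ} ⊆ ⋂_{r ∈ idx p} Ŝ_r`, the reduced structure constants are
totally antisymmetric and satisfy the generalized Jacobi identity on the finite index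
set `Ř = {(a,α) | α ∈ Š_{P a}}`; hence `|Ǧ_R|` is a higher-order Lie algebra of
order `n`. -/
theorem reducedResonantC_isMultialgebra {k ι S I : Type*} [CommRing k] [Fintype ι]
    [CommSemigroup S] [Fintype S] {n : ℕ} (hn : 2 ≤ n)
    (C : (Fin n → ι) → ι → k)
    (hA : IsTotallyAntisymmetric C) (hJ : SatisfiesGJI C)
    (P : ι → I) (idx : (Fin n → I) → Set I)
    (hstruct : ∀ (a : Fin n → ι) (c : ι), C a c ≠ 0 → P c ∈ idx (fun l => P (a l)))
    (Sp Sc Sh : I → Set S)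
    (hpart : ∀ p : I, Sp p = Sc p ∪ Sh p)
    (hdisj : ∀ p : I, Sc p ∩ Sh p = ∅)
    (hres : ∀ (p : Fin n → I) (s : Fin n → S), (∀ l, s l ∈ Sp (p l)) →
      ∀ r ∈ idx p, ∃ u ∈ Sp r, wprod s = (u : WithOne S))
    (hred : ∀ (p : Fin n → I) (s : Fin n → S),
      s ⟨0, by omega⟩ ∈ Sh (p ⟨0, by omega⟩) →
      (∀ l : Fin n, (l : ℕ) ≠ 0 → s l ∈ Sc (p l)) →
      ∀ r ∈ idx p, ∃ u ∈ Sh r, wprod s = (u : WithOne S)) :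
    IsTotallyAntisymmetric (reducedResonantC C P Sc) ∧
    SatisfiesGJI (reducedResonantC C P Sc) :=
  ⟨isTotallyAntisymmetric_reducedResonantC hA P Sc,
    IsResonantReduction.satisfiesGJI_reducedResonantC
      ⟨hstruct, hpart, hdisj, hres, fun _ => hred⟩ (by omega) hJ⟩
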